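/- arXiv:2401.03684 — 5 statements merged into one kernel-verified Lean document; each statement's English description precedes it below -/
import Mathlib

section
/- Let A be a real d×n matrix of rank d, P = Aᵀ(AAᵀ)⁻¹A, and for a d-subset I of {1,...,n} let P_I denote the principal d×d submatrix of P with rows and columns indexed by I. Then det(P_I) = det(A_I)² / (∑_J det(A_J)²), where the sum ranges over all d-subsets J of {1,...,n}. -/
open Matrix

open Equiv Finset

theorem cauchyBinet {d n : ℕ} (M : Matrix (Fin d) (Fin n) ℝ) (N : Matrix (Fin n) (Fin d) ℝ) :
    det (M * N) = ∑ J : {s : Finset (Fin n) // s.card = d},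
      det (M.submatrix id (J.1.orderEmbOfFin J.2)) *
        det (N.submatrix (J.1.orderEmbOfFin J.2) id) := by
  have step1 : det (M * N) = ∑ p : Fin d → Fin n,
      (∏ i, N (p i) i) * det (M.submatrix id p) := by
    calc det (M * N)
        = ∑ p : Fin d → Fin n, ∑ σ : Perm (Fin d),
            (Perm.sign σ : ℝ) * ∏ i, M (σ i) (p i) * N (p i) i := by
          simp only [det_apply', mul_apply, prod_univ_sum, mul_sum, Fintype.piFinset_univ]
          rw [Finset.sum_comm]
      _ = ∑ p : Fin d → Fin n, (∏ i, N (p i) i) * det (M.submatrix id p) := by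
          refine Finset.sum_congr rfl fun p _ => ?_
          rw [det_apply', Finset.mul_sum]
          refine Finset.sum_congr rfl fun σ _ => ?_
          simp only [prod_mul_distrib, submatrix_apply, id_eq]
          ring
  rw [step1]
  have step2 : ∑ p : Fin d → Fin n, (∏ i, N (p i) i) * det (M.submatrix id p)
      = ∑ p ∈ Finset.univ.filter (fun p : Fin d → Fin n => Function.Injective p),
          (∏ i, N (p i) i) * det (M.submatrix id p) := by
    refine (Finset.sum_subset (Finset.filter_subset _ _) fun p _ hp => ?_).symm
    simp only [mem_filter, mem_univ, true_and] at hp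
    rw [Function.Injective] at hp
    push_neg at hp
    obtain ⟨i, j, hij, hne⟩ := hp
    rw [det_zero_of_column_eq hne (fun k => by simp [hij]), mul_zero]
  rw [step2]
  rw [← Finset.sum_bij (s := (Finset.univ : Finset ({s : Finset (Fin n) // s.card = d} × Perm (Fin d))))
      (i := fun x _ => (x.1.1.orderEmbOfFin x.1.2 : Fin d → Fin n) ∘ x.2)
      (t := Finset.univ.filter (fun p : Fin d → Fin n => Function.Injective p))
      ?hi ?inj ?surj
      (f := fun x => (Perm.sign x.2 : ℝ) * ((∏ i, N (x.1.1.orderEmbOfFin x.1.2 (x.2 i)) i)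
        * det (M.submatrix id (x.1.1.orderEmbOfFin x.1.2))))
      (g := fun p => (∏ i, N (p i) i) * det (M.submatrix id p)) ?val]
  case hi =>
    intro x _
    simp only [mem_filter, mem_univ, true_and]
    exact (x.1.1.orderEmbOfFin x.1.2).injective.comp x.2.injective
  case inj =>
    rintro ⟨⟨J, hJc⟩, τ⟩ _ ⟨⟨K, hKc⟩, ρ⟩ _ h
    simp only at h
    have hr : (J : Set (Fin n)) = (K : Set (Fin n)) := by
      rw [← Finset.range_orderEmbOfFin J hJc, ← Finset.range_orderEmbOfFin K hKc]
      have h2 : Set.range (⇑(J.orderEmbOfFin hJc) ∘ ⇑τ)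
          = Set.range (⇑(K.orderEmbOfFin hKc) ∘ ⇑ρ) := by rw [h]
      rwa [Set.range_comp, Set.range_comp, Equiv.range_eq_univ, Equiv.range_eq_univ,
        Set.image_univ, Set.image_univ] at h2
    obtain rfl : J = K := Finset.coe_injective hr
    have ht : τ = ρ := by
      ext i
      exact congrArg Fin.val ((J.orderEmbOfFin hJc).injective (congrFun h i))
    simp [ht]
  case surj =>
    intro p hp
    simp only [mem_filter, mem_univ, true_and] at hp
    set J : Finset (Fin n) := Finset.univ.image p with hJdef
    have hJ : J.card = d := by
      rw [hJdef, Finset.card_image_of_injective _ hp, Finset.card_univ, Fintype.card_fin]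
    have hmem : ∀ i, p i ∈ J := fun i => Finset.mem_image_of_mem p (Finset.mem_univ i)
    let f : Fin d → Fin d := fun i => (J.orderIsoOfFin hJ).symm ⟨p i, hmem i⟩
    have hf : Function.Injective f := by
      intro i j hij
      exact hp (congrArg Subtype.val ((J.orderIsoOfFin hJ).symm.injective hij))
    let τ : Perm (Fin d) := Equiv.ofBijective f (Finite.injective_iff_bijective.mp hf)
    refine ⟨(⟨⟨J, hJ⟩, τ⟩ : {s : Finset (Fin n) // s.card = d} × Perm (Fin d)), mem_univ _, ?_⟩
    funext i
    show J.orderEmbOfFin hJ (τ i) = p i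
    have : ((J.orderIsoOfFin hJ) (f i) : Fin n) = p i := by
      simp [f]
    rw [← Finset.coe_orderIsoOfFin_apply]
    exact this
  case val =>
    intro x _
    have key : det (M.submatrix id (⇑((x.1.1).orderEmbOfFin x.1.2) ∘ ⇑x.2))
        = (Perm.sign x.2 : ℝ) * det (M.submatrix id ⇑((x.1.1).orderEmbOfFin x.1.2)) := by
      rw [← det_permute' x.2 (M.submatrix id ⇑((x.1.1).orderEmbOfFin x.1.2)), submatrix_submatrix]
      rfl
    beta_reduce
    rw [key]
    simp only [Function.comp_apply]
    ring
  · rw [Fintype.sum_prod_type]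
    refine Finset.sum_congr rfl fun J _ => ?_
    rw [det_apply' (N.submatrix _ id), Finset.mul_sum]
    refine Finset.sum_congr rfl fun τ _ => ?_
    simp only [submatrix_apply, id_eq]
    ring

theorem stmt_2 (d n : ℕ) (A : Matrix (Fin d) (Fin n) ℝ) (hA : A.rank = d)
    (P : Matrix (Fin n) (Fin n) ℝ) (hP : P = Aᵀ * (A * Aᵀ)⁻¹ * A)
    (I : Finset (Fin n)) (hI : I.card = d) :
    (P.submatrix (I.orderEmbOfFin hI) (I.orderEmbOfFin hI)).det =
      ((A.submatrix id (I.orderEmbOfFin hI)).det) ^ 2 /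
        ∑ J : {s : Finset (Fin n) // s.card = d},
          ((A.submatrix id (J.1.orderEmbOfFin J.2)).det) ^ 2 := by
  set e := I.orderEmbOfFin hI
  -- A * Aᵀ is invertible
  have hrank : (A * Aᵀ).rank = d := by rw [Matrix.rank_self_mul_transpose, hA]
  have hunit : IsUnit (A * Aᵀ) := by
    rw [← Matrix.mulVec_surjective_iff_isUnit]
    have : Function.Surjective ⇑(A * Aᵀ).mulVecLin → Function.Surjective (A * Aᵀ).mulVec := fun h => h
    apply this
    rw [← LinearMap.range_eq_top (f := (A * Aᵀ).mulVecLin)]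
    apply Submodule.eq_top_of_finrank_eq
    rw [show Module.finrank ℝ (LinearMap.range (A * Aᵀ).mulVecLin) = (A * Aᵀ).rank from rfl,
      hrank, Module.finrank_fintype_fun_eq_card, Fintype.card_fin]
  have hdet : IsUnit (A * Aᵀ).det := (Matrix.isUnit_iff_isUnit_det _).mp hunit
  have hdet' : (A * Aᵀ).det ≠ 0 := hdet.ne_zero
  -- Cauchy-Binet
  have hsum : (∑ J : {s : Finset (Fin n) // s.card = d},
      ((A.submatrix id (J.1.orderEmbOfFin J.2)).det) ^ 2) = (A * Aᵀ).det := by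
    rw [cauchyBinet A Aᵀ]
    refine (Finset.sum_congr rfl fun J _ => ?_).symm
    rw [show Aᵀ.submatrix (J.1.orderEmbOfFin J.2) id = (A.submatrix id (J.1.orderEmbOfFin J.2))ᵀ
      from rfl, det_transpose, sq]
  rw [hsum, hP]
  have h1 : (Aᵀ * (A * Aᵀ)⁻¹ * A).submatrix e e
      = (Aᵀ.submatrix e id) * (A * Aᵀ)⁻¹ * (A.submatrix id e) := by
    rw [Matrix.submatrix_mul _ _ e id e Function.bijective_id,
      Matrix.submatrix_mul _ _ e id id Function.bijective_id, submatrix_id_id]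
  rw [h1, det_mul, det_mul,
    show Aᵀ.submatrix e id = (A.submatrix id e)ᵀ from rfl, det_transpose,
    Matrix.det_nonsing_inv, Ring.inverse_eq_inv']
  field_simp
end

section
/- Every complex symmetric n×n matrix P satisfying P² = P and rank(P) = d is conjugate, under the complex orthogonal group O(n,ℂ) acting by Q ↦ OQOᵀ, to the diagonal matrix M_d with d ones followed by n−d zeros on the diagonal. -/
/-!
The dot product is a nondegenerate symmetric bilinear form on `Kⁿ`, and a symmetric idempotent
`P` is a self-adjoint projection for it, so `range P` and `ker P` are orthogonal complements on
each of which the form stays nondegenerate. Over an algebraically closed field of characteristic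
`≠ 2` each of them has an orthonormal basis (rescale an orthogonal basis by square roots of the
nonzero values `B (v i) (v i)`). Taking these `d + (n - d)` vectors as the rows of `O` gives
`O Oᵀ = 1` and `O P = M_d O`.
-/

open Matrix Module LinearMap

namespace LinearMap.BilinForm

variable {K V : Type*} [Field K] [AddCommGroup V] [Module K V] {B : LinearMap.BilinForm K V}

theorem exists_orthonormal_of_isAlgClosed [IsAlgClosed K] [Invertible (2 : K)]
    [FiniteDimensional K V] (hs : B.IsSymm) (hB : B.Nondegenerate)
    {ι : Type*} [Fintype ι] [DecidableEq ι] (hι : Fintype.card ι = finrank K V) :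
    ∃ v : ι → V, ∀ i j, B (v i) (v j) = if i = j then 1 else 0 := by
  obtain ⟨b, hb⟩ := exists_orthogonal_basis (isSymm_iff.1 hs)
  have hb_ne (i) : B (b i) (b i) ≠ 0 := iIsOrtho.not_isOrtho_basis_self_of_nondegenerate hb hB i
  choose r hr using fun i => IsAlgClosed.exists_eq_mul_self (B (b i) (b i))
  have hr_ne (i) : r i ≠ 0 := fun h => hb_ne i (by rw [hr i, h, mul_zero])
  let e := Fintype.equivFinOfCardEq hι
  refine ⟨fun i => (r (e i))⁻¹ • b (e i), fun i j => ?_⟩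
  simp only [map_smul, LinearMap.smul_apply, smul_eq_mul, e.apply_eq_iff_eq.symm]
  by_cases hij : e i = e j
  · rw [if_pos hij, ← hij, hr]
    field_simp [hr_ne (e i)]
  · rw [if_neg hij, hb hij, mul_zero, mul_zero]

theorem nondegenerate_restrict_of_codisjoint (hs : B.IsSymm) (hB : B.Nondegenerate)
    {p q : Submodule K V} (hpq : Codisjoint p q) (hortho : ∀ x ∈ p, ∀ y ∈ q, B x y = 0) :
    (B.restrict p).Nondegenerate := by
  refine (hs.restrict p).isRefl.nondegenerate_iff_separatingLeft.2 ?_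
  rw [separatingLeft_iff_ker_eq_bot, ker_restrict_eq_of_codisjoint hpq hortho, hB.ker_eq_bot,
    Submodule.comap_bot, Submodule.ker_subtype]

variable {f : V →ₗ[K] V}

theorem apply_range_ker_eq_zero (hadj : IsAdjointPair B B f f) :
    ∀ x ∈ range f, ∀ y ∈ ker f, B x y = 0 := by
  rintro _ ⟨x, rfl⟩ y hy
  rw [hadj x y, mem_ker.1 hy, map_zero]

theorem apply_ker_range_eq_zero (hadj : IsAdjointPair B B f f) :
    ∀ x ∈ ker f, ∀ y ∈ range f, B x y = 0 := by
  rintro x hx _ ⟨y, rfl⟩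
  rw [← hadj x y, mem_ker.1 hx, map_zero, LinearMap.zero_apply]

theorem exists_orthonormal_eigenvectors_of_isIdempotentElem [IsAlgClosed K] [Invertible (2 : K)]
    [FiniteDimensional K V] (hs : B.IsSymm) (hB : B.Nondegenerate) (hf : IsIdempotentElem f)
    (hadj : IsAdjointPair B B f f) {ι : Type*} [Fintype ι] [DecidableEq ι]
    (hι : Fintype.card ι = finrank K V) (s : Set ι) [DecidablePred (· ∈ s)]
    (hcard : Fintype.card s = finrank K (range f)) :
    ∃ v : ι → V, (∀ i j, B (v i) (v j) = if i = j then 1 else 0) ∧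
      ∀ i, f (v i) = if i ∈ s then v i else 0 := by
  have hcard_compl : Fintype.card ↥sᶜ = finrank K (ker f) := by
    have := finrank_range_add_finrank_ker f
    rw [Fintype.card_compl_set, hι, hcard]
    omega
  obtain ⟨u, hu⟩ := exists_orthonormal_of_isAlgClosed (hs.restrict _)
    (nondegenerate_restrict_of_codisjoint hs hB hf.isCompl.codisjoint
      (apply_range_ker_eq_zero hadj)) hcard
  obtain ⟨w, hw⟩ := exists_orthonormal_of_isAlgClosed (hs.restrict _)
    (nondegenerate_restrict_of_codisjoint hs hB hf.isCompl.symm.codisjoint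
      (apply_ker_range_eq_zero hadj)) hcard_compl
  refine ⟨fun i => if hi : i ∈ s then (u ⟨i, hi⟩ : V) else w ⟨i, hi⟩,
    fun i j => ?_, fun i => ?_⟩
  · by_cases hi : i ∈ s <;> by_cases hj : j ∈ s
    · simpa [hi, hj] using hu ⟨i, hi⟩ ⟨j, hj⟩
    · simpa [hi, hj, ne_of_mem_of_not_mem hi hj] using
        apply_range_ker_eq_zero hadj _ (u ⟨i, hi⟩).2 _ (w ⟨j, hj⟩).2
    · simpa [hi, hj, (ne_of_mem_of_not_mem hj hi).symm] using
        apply_ker_range_eq_zero hadj _ (w ⟨i, hi⟩).2 _ (u ⟨j, hj⟩).2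
    · simpa [hi, hj] using hw ⟨i, hi⟩ ⟨j, hj⟩
  · by_cases hi : i ∈ s
    · simpa [hi] using hf.mem_range_iff.1 (u ⟨i, hi⟩).2
    · simp [hi]

end LinearMap.BilinForm

namespace Matrix

variable {ι K : Type*} [Fintype ι] [Field K]

theorem dotProductBilin_isSymm :
    LinearMap.BilinForm.IsSymm (dotProductBilin K K : LinearMap.BilinForm K (ι → K)) :=
  ⟨dotProduct_comm⟩

theorem dotProductBilin_nondegenerate :
    (dotProductBilin K K : LinearMap.BilinForm K (ι → K)).Nondegenerate :=
  (dotProductBilin_isSymm (ι := ι) (K := K)).isRefl.nondegenerate_iff_separatingLeft.2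
    dotProduct_eq_zero

theorem IsSymm.mulVec_dotProduct {P : Matrix ι ι K} (hP : P.IsSymm) (x y : ι → K) :
    P *ᵥ x ⬝ᵥ y = x ⬝ᵥ P *ᵥ y := by
  rw [dotProduct_mulVec, ← vecMul_transpose, hP]

theorem IsSymm.exists_orthogonal_conj_eq_diagonal_of_isIdempotentElem [DecidableEq ι]
    [IsAlgClosed K] [Invertible (2 : K)] {P : Matrix ι ι K} (hP : P.IsSymm)
    (hidem : IsIdempotentElem P) (s : Set ι) [DecidablePred (· ∈ s)]
    (hs : Fintype.card s = P.rank) :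
    ∃ O : Matrix ι ι K, O * Oᵀ = 1 ∧
      O * P * Oᵀ = diagonal fun i => if i ∈ s then 1 else 0 := by
  obtain ⟨v, hv, hPv⟩ := LinearMap.BilinForm.exists_orthonormal_eigenvectors_of_isIdempotentElem
    dotProductBilin_isSymm dotProductBilin_nondegenerate (f := P.mulVecLin)
    (hidem.map toLinAlgEquiv') hP.mulVec_dotProduct (finrank_fintype_fun_eq_card K).symm s hs
  have hO : of v * (of v)ᵀ = 1 := by
    ext i j
    simpa [mul_apply, dotProduct, one_apply] using hv i j
  have hOP : of v * P = diagonal (fun i => if i ∈ s then 1 else 0) * of v := by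
    ext i j
    have hrow : v i ᵥ* P = P *ᵥ v i := by rw [← vecMul_transpose, hP.eq]
    rw [mul_apply_eq_vecMul, show of v i = v i from rfl, hrow, diagonal_mul, of_apply,
      ← mulVecLin_apply, hPv]
    split_ifs <;> simp
  exact ⟨of v, hO, by rw [hOP, Matrix.mul_assoc, hO, Matrix.mul_one]⟩

end Matrix

theorem stmt_5 (n d : ℕ) (P : Matrix (Fin n) (Fin n) ℂ)
    (hsymm : P.IsSymm) (hidem : P * P = P) (hrank : P.rank = d) :
    ∃ O : Matrix (Fin n) (Fin n) ℂ, O * Oᵀ = 1 ∧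
      O * P * Oᵀ = Matrix.diagonal (fun i : Fin n => if (i : ℕ) < d then 1 else 0) := by
  have hd : d ≤ n := by simpa [← hrank] using P.rank_le_width
  exact hsymm.exists_orthogonal_conj_eq_diagonal_of_isIdempotentElem hidem {i | (i : ℕ) < d}
    (by rw [hrank]; exact Fintype.card_fin_lt_of_le hd)
end

section
/- Let A be a real d×n matrix of rank d, and for i ∈ {1,...,n} and a (d−1)-subset K of {1,...,n} let x_{iK} denote the d×d minor of A with columns indexed by {i} ∪ K (with the appropriate sign, i.e., the Plücker coordinate with index sequence i followed by K). Then the (i,j) entry of the orthogonal projection P = Aᵀ(AAᵀ)⁻¹A satisfies p_ij = (∑_K x_{iK} x_{jK}) / (∑_I x_I²), where K ranges over (d−1)-subsets and I over d-subsets of {1,...,n}. -/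
/-!
Write `a_k` for the `k`-th column of `A` and `M = A Aᵀ`. By Cauchy–Binet, `det M = ∑_I x_I²`.
Cauchy–Binet applied to the `d × (n + 1)` matrices `[a_j | A]` and `[a_i | A]`, whose product
`[a_j | A] [a_i | A]ᵀ` is `M + a_j a_iᵀ`, splits according to whether the chosen `d` columns
contain the adjoined one, and gives `det (M + a_j a_iᵀ) = det M + ∑_K x_{iK} x_{jK}`.
The matrix determinant lemma evaluates the left side as `det M (1 + a_iᵀ M⁻¹ a_j)`, and
`a_iᵀ M⁻¹ a_j = p_ij`.
-/

open Matrix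

/-- The column selection `(i, K)`: column `i` followed by the elements of `K`
in increasing order, as a map `Fin d → Fin n` (requires `0 < d`, `K.card = d - 1`). -/
def colsIK (d n : ℕ) (hd : 0 < d) (i : Fin n) (K : Finset (Fin n)) (hK : K.card = d - 1)
    (t : Fin d) : Fin n :=
  if h : (t : ℕ) = 0 then i else K.orderEmbOfFin hK ⟨(t : ℕ) - 1, by omega⟩

open Finset

theorem Finset.orderEmbOfFin_map {α β : Type*} [LinearOrder α] [LinearOrder β] (f : α ↪o β)
    (s : Finset α) {k : ℕ} (h : s.card = k) :
    ⇑((s.map f.toEmbedding).orderEmbOfFin (by rw [card_map, h])) = f ∘ s.orderEmbOfFin h :=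
  (orderEmbOfFin_unique _ (fun x => mem_map_of_mem _ (orderEmbOfFin_mem s h x))
    (f.strictMono.comp (s.orderEmbOfFin h).strictMono)).symm

theorem Finset.orderEmbOfFin_insert_of_forall_lt {α : Type*} [LinearOrder α] {s : Finset α}
    {a : α} (ha : ∀ b ∈ s, a < b) {k : ℕ} (h : s.card = k) :
    ⇑((insert a s).orderEmbOfFin (by rw [card_insert_of_notMem fun h' => (ha a h').false, h])) =
      Fin.cons a (s.orderEmbOfFin h) :=
  (orderEmbOfFin_unique _
    (Fin.cases (mem_insert_self a s) fun x => mem_insert_of_mem (orderEmbOfFin_mem s h x))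
    (Fin.strictMono_cons.2 ⟨fun x => ha _ (orderEmbOfFin_mem s h x),
      (s.orderEmbOfFin h).strictMono⟩)).symm

theorem Finset.sum_injective_eq_sum_sum_perm {ι M : Type*} [LinearOrder ι] [Fintype ι]
    [AddCommMonoid M] (m : ℕ) (g : (Fin m → ι) → M) :
    ∑ f : Fin m → ι with Function.Injective f, g f =
      ∑ S : {s : Finset ι // s.card = m}, ∑ σ : Equiv.Perm (Fin m),
        g (S.1.orderEmbOfFin S.2 ∘ σ) := by
  rw [← Fintype.sum_prod_type' fun (S : {s : Finset ι // s.card = m}) (σ : Equiv.Perm _) =>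
    g (S.1.orderEmbOfFin S.2 ∘ σ)]
  symm
  refine sum_nbij (fun p => p.1.1.orderEmbOfFin p.1.2 ∘ p.2) ?_ ?_ ?_ fun _ _ => rfl
  · rintro ⟨S, σ⟩ -
    simpa using (S.1.orderEmbOfFin S.2).injective.comp σ.injective
  · rintro ⟨⟨S, hS⟩, σ⟩ - ⟨⟨T, hT⟩, τ⟩ - h
    have hST : S = T := by
      have hrange := congrArg Set.range h
      simpa only [Set.range_comp, σ.range_eq_univ, τ.range_eq_univ, Set.image_univ,
        range_orderEmbOfFin, coe_inj] using hrange
    subst hST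
    exact Prod.ext rfl (Equiv.ext fun x => (S.orderEmbOfFin hS).injective (congrFun h x))
  · intro f hf
    have hinj : Function.Injective f := by simpa using hf
    set S := univ.image f
    have hS : S.card = m := by rw [card_image_of_injective _ hinj, card_univ, Fintype.card_fin]
    let τ (x : Fin m) : Fin m :=
      (S.orderIsoOfFin hS).symm ⟨f x, mem_image_of_mem f (mem_univ x)⟩
    have hτ : Function.Bijective τ := by
      refine (Fintype.bijective_iff_injective_and_card τ).2 ⟨fun a b hab => hinj ?_, rfl⟩
      simpa using congrArg Subtype.val ((S.orderIsoOfFin hS).symm.injective hab)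
    refine ⟨(⟨S, hS⟩, Equiv.ofBijective τ hτ), mem_coe.2 (mem_univ _), funext fun x => ?_⟩
    change S.orderEmbOfFin hS (τ x) = f x
    rw [← coe_orderIsoOfFin_apply, OrderIso.apply_symm_apply]

theorem Fin.insert_zero_map_preimage_succ {n : ℕ} {S : Finset (Fin (n + 1))} (h : 0 ∈ S) :
    insert 0 ((S.preimage Fin.succ (Fin.succ_injective _).injOn).map
      (Fin.succOrderEmb n).toEmbedding) = S := by
  ext x; cases x using Fin.cases <;> simp [h]

theorem Fin.map_preimage_succ {n : ℕ} {S : Finset (Fin (n + 1))} (h : 0 ∉ S) :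
    (S.preimage Fin.succ (Fin.succ_injective _).injOn).map (Fin.succOrderEmb n).toEmbedding =
      S := by
  ext x; cases x using Fin.cases <;> simp [h]

theorem Fin.sum_finset_card_succ {M : Type*} [AddCommMonoid M] {m n : ℕ}
    (F : (Fin (m + 1) → Fin (n + 1)) → M) :
    ∑ S : {s : Finset (Fin (n + 1)) // s.card = m + 1}, F (S.1.orderEmbOfFin S.2) =
      ∑ K : {s : Finset (Fin n) // s.card = m},
        F (Fin.cons 0 (Fin.succ ∘ K.1.orderEmbOfFin K.2)) +
      ∑ I : {s : Finset (Fin n) // s.card = m + 1}, F (Fin.succ ∘ I.1.orderEmbOfFin I.2) := by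
  let succ : Fin n ↪o Fin (n + 1) := Fin.succOrderEmb n
  let tail (S : Finset (Fin (n + 1))) : Finset (Fin n) :=
    S.preimage Fin.succ (Fin.succ_injective _).injOn
  have zero_lt (K : Finset (Fin n)) : ∀ b ∈ K.map succ.toEmbedding, 0 < b := by
    simp [succ, Fin.succ_pos]
  rw [← sum_filter_add_sum_filter_not univ fun S => 0 ∈ S.1]
  congr 1
  · symm
    refine sum_bij' (fun K _ => ⟨insert 0 (K.1.map succ.toEmbedding),
        by rw [card_insert_of_notMem fun h => (zero_lt K.1 0 h).false, card_map, K.2]⟩)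
      (fun S hS => ⟨tail S.1, ?_⟩) (fun K _ => by simp) (fun _ _ => mem_univ _)
      (fun K _ => Subtype.ext (by ext; simp [tail, succ]))
      (fun S hS => Subtype.ext (insert_zero_map_preimage_succ (mem_filter.1 hS).2))
      (fun K _ => ?_)
    · have hcard := congrArg card (insert_zero_map_preimage_succ (mem_filter.1 hS).2)
      rw [card_insert_of_notMem fun h => (zero_lt _ 0 h).false, card_map, S.2] at hcard
      exact Nat.succ_injective hcard
    · rw [orderEmbOfFin_insert_of_forall_lt (zero_lt K.1) (by rw [card_map, K.2]),
        orderEmbOfFin_map succ K.1 K.2]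
      rfl
  · symm
    refine sum_bij' (fun I _ => ⟨I.1.map succ.toEmbedding, by rw [card_map, I.2]⟩)
      (fun S hS => ⟨tail S.1, ?_⟩) (fun I _ => ?_) (fun _ _ => mem_univ _)
      (fun I _ => Subtype.ext (by ext; simp [tail, succ]))
      (fun S hS => Subtype.ext (map_preimage_succ (mem_filter.1 hS).2)) (fun I _ => ?_)
    · rw [← card_map succ.toEmbedding, map_preimage_succ (mem_filter.1 hS).2, S.2]
    · simpa using fun h => (zero_lt I.1 0 h).false
    · rw [orderEmbOfFin_map succ I.1 I.2]
      rfl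

namespace Matrix

variable {R : Type*} [CommRing R]

theorem det_mul_eq_sum_prod_mul_det_submatrix {m ι : Type*} [Fintype m] [DecidableEq m]
    [Fintype ι] (A : Matrix m ι R) (B : Matrix ι m R) :
    det (A * B) = ∑ f : m → ι, (∏ i, A i (f i)) * det (B.submatrix f id) := by
  let D := (detRowAlternating : (m → R) [⋀^m]→ₗ[R] R).toMultilinearMap
  have hrows : det (A * B) = D fun i => ∑ k, A i k • B k := by
    change det _ = det _
    congr 1
    ext i j; simp [mul_apply, Finset.sum_apply]
  rw [hrows, D.map_sum]
  refine sum_congr rfl fun f _ => ?_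
  rw [D.map_smul_univ (fun i => A i (f i)) (fun i => B (f i)), smul_eq_mul]
  rfl

theorem sum_perm_prod_mul_det_submatrix_comp {m ι : Type*} [Fintype m] [DecidableEq m]
    (A : Matrix m ι R) (B : Matrix ι m R) (e : m → ι) :
    ∑ σ : Equiv.Perm m, (∏ i, A i (e (σ i))) * det (B.submatrix (e ∘ σ) id) =
      det (A.submatrix id e) * det (B.submatrix e id) := by
  have hperm (σ : Equiv.Perm m) : B.submatrix (e ∘ σ) id = (B.submatrix e id).submatrix σ id :=
    rfl
  simp only [hperm, det_permute]
  rw [← det_transpose (A.submatrix id e), det_apply' (A.submatrix id e)ᵀ, sum_mul]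
  refine sum_congr rfl fun σ _ => ?_
  simp only [transpose_apply, submatrix_apply, id_eq]
  ring

theorem det_mul_eq_sum_det_submatrix_mul_det_submatrix {ι : Type*} [Fintype ι] [LinearOrder ι]
    {m : ℕ} (A : Matrix (Fin m) ι R) (B : Matrix ι (Fin m) R) :
    det (A * B) = ∑ S : {s : Finset ι // s.card = m},
      det (A.submatrix id (S.1.orderEmbOfFin S.2)) *
        det (B.submatrix (S.1.orderEmbOfFin S.2) id) := by
  rw [det_mul_eq_sum_prod_mul_det_submatrix,
    ← sum_filter_of_ne (p := Function.Injective) fun f _ hf => ?_, sum_injective_eq_sum_sum_perm]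
  · exact sum_congr rfl fun S _ => sum_perm_prod_mul_det_submatrix_comp A B _
  · by_contra hf'
    obtain ⟨a, b, hab, hne⟩ := Function.not_injective_iff.1 hf'
    exact hf (by rw [det_zero_of_row_eq hne (by ext; simp [hab]), mul_zero])

theorem det_mul_transpose_add_vecMulVec {m n : ℕ} (A C : Matrix (Fin (m + 1)) (Fin n) R)
    (u v : Fin (m + 1) → R) :
    det (A * Cᵀ + vecMulVec u v) = det (A * Cᵀ) + ∑ K : {s : Finset (Fin n) // s.card = m},
      det (of fun r => vecCons (u r) (A.submatrix id (K.1.orderEmbOfFin K.2) r)) *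
      det (of fun r => vecCons (v r) (C.submatrix id (K.1.orderEmbOfFin K.2) r)) := by
  set A' : Matrix (Fin (m + 1)) (Fin (n + 1)) R := of fun r => vecCons (u r) (A r)
  set C' : Matrix (Fin (m + 1)) (Fin (n + 1)) R := of fun r => vecCons (v r) (C r)
  have haug : A * Cᵀ + vecMulVec u v = A' * C'ᵀ := by
    ext r c
    simp [A', C', mul_apply, Fin.sum_univ_succ, vecMulVec_apply, add_comm]
  simp only [haug, det_mul_eq_sum_det_submatrix_mul_det_submatrix, ← transpose_submatrix,
    det_transpose]
  rw [Fin.sum_finset_card_succ fun e => det (A'.submatrix id e) * det (C'.submatrix id e),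
    add_comm]
  -- the sums over the column sets avoiding the adjoined column agree definitionally
  congr 1
  refine sum_congr rfl fun K _ => ?_
  congr 2 <;> ext r t <;> cases t using Fin.cases <;> simp [A', C']

theorem det_add_vecMulVec {n : Type*} [Fintype n] [DecidableEq n] {M : Matrix n n R}
    (hM : IsUnit M.det) (u v : n → R) :
    det (M + vecMulVec u v) = det M * (1 + v ⬝ᵥ (M⁻¹ *ᵥ u)) := by
  rw [vecMulVec_eq Unit, det_add_replicateCol_mul_replicateRow hM, det_unique (1 + _),
    add_apply, one_apply_eq, Matrix.mul_assoc, ← replicateCol_mulVec,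
    replicateRow_mul_replicateCol_apply]

theorem isUnit_of_rank_eq_card {K n : Type*} [Field K] [Fintype n] [DecidableEq n]
    {M : Matrix n n K} (h : M.rank = Fintype.card n) : IsUnit M :=
  linearIndependent_rows_iff_isUnit.1 <| linearIndependent_iff_card_eq_finrank_span.2 <| by
    rw [← h, rank_eq_finrank_span_row]; rfl

end Matrix

theorem Matrix.submatrix_colsIK {R : Type*} {m n : ℕ} (A : Matrix (Fin (m + 1)) (Fin n) R)
    (hd : 0 < m + 1) (i : Fin n) (K : Finset (Fin n)) (hK : K.card = m + 1 - 1) :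
    A.submatrix id (colsIK (m + 1) n hd i K hK) =
      of fun r => vecCons (A r i) (A.submatrix id (K.orderEmbOfFin hK) r) := by
  ext r t
  cases t using Fin.cases <;> simp [colsIK]

theorem stmt_10 (d n : ℕ) (hd : 0 < d) (A : Matrix (Fin d) (Fin n) ℝ) (hA : A.rank = d)
    (P : Matrix (Fin n) (Fin n) ℝ) (hP : P = Aᵀ * (A * Aᵀ)⁻¹ * A) (i j : Fin n) :
    P i j =
      (∑ K : {s : Finset (Fin n) // s.card = d - 1},
          (A.submatrix id (colsIK d n hd i K.1 K.2)).det *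
          (A.submatrix id (colsIK d n hd j K.1 K.2)).det) /
      (∑ I : {s : Finset (Fin n) // s.card = d},
          ((A.submatrix id (I.1.orderEmbOfFin I.2)).det) ^ 2) := by
  obtain ⟨m, rfl⟩ : ∃ m, d = m + 1 := ⟨d - 1, by omega⟩
  have hunit : IsUnit (A * Aᵀ).det := (isUnit_iff_isUnit_det _).1 <|
    isUnit_of_rank_eq_card (by rw [rank_self_mul_transpose, hA, Fintype.card_fin])
  have hden : (A * Aᵀ).det = ∑ I : {s : Finset (Fin n) // s.card = m + 1},
      (A.submatrix id (I.1.orderEmbOfFin I.2)).det ^ 2 := by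
    simp only [det_mul_eq_sum_det_submatrix_mul_det_submatrix, ← transpose_submatrix,
      det_transpose, sq]
  have hnum := det_mul_transpose_add_vecMulVec A A (fun r => A r j) (fun r => A r i)
  rw [det_add_vecMulVec hunit, mul_add, mul_one, add_right_inj] at hnum
  have hPij : P i j = (fun r => A r i) ⬝ᵥ ((A * Aᵀ)⁻¹ *ᵥ fun r => A r j) := by
    rw [hP, Matrix.mul_assoc, mul_apply]; rfl
  rw [hPij, ← hden, eq_div_iff hunit.ne_zero, mul_comm]
  simp only [submatrix_colsIK]
  conv_rhs => enter [2, K]; rw [mul_comm]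
  exact hnum
end

section
/- Let X be the cocircuit matrix of a d-dimensional subspace of ℝⁿ, i.e., the n×C(n,d−1) matrix with entry x_{iK} in row i and column K, where x denote the Plücker coordinates of a rank-d matrix A. Then the orthogonal projection onto the subspace equals P = d · XXᵀ / trace(XᵀX). -/
open Matrix Finset Equiv BigOperators

section CauchyBinet

set_option linter.unusedSectionVars false

variable {m : ℕ} {s : Type*} [Fintype s] [DecidableEq s] [LinearOrder s]

lemma card_image_inj (p : Fin m → s) (hp : Function.Injective p) :
    (Finset.image p Finset.univ).card = m := by
  simp [Finset.card_image_of_injective _ hp]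

/-- The permutation matching an injective `p : Fin m → s` with the ordered
enumeration of its image. -/
noncomputable def permOfInj (p : Fin m → s) (hp : Function.Injective p) : Equiv.Perm (Fin m) :=
  (Equiv.ofBijective
      (fun i => (⟨p i, Finset.mem_image_of_mem p (Finset.mem_univ i)⟩ :
        {x // x ∈ Finset.image p Finset.univ}))
      ((Fintype.bijective_iff_injective_and_card _).mpr
        ⟨fun a b h => hp (congrArg Subtype.val h), by
          rw [Fintype.card_coe, card_image_inj p hp, Fintype.card_fin]⟩)).trans
    ((Finset.image p Finset.univ).orderIsoOfFin (card_image_inj p hp)).toEquiv.symm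

lemma orderEmbOfFin_permOfInj (p : Fin m → s) (hp : Function.Injective p) (i : Fin m) :
    (Finset.image p Finset.univ).orderEmbOfFin (card_image_inj p hp) (permOfInj p hp i) = p i := by
  rw [← Finset.coe_orderIsoOfFin_apply]
  simp [permOfInj]

lemma image_orderEmbOfFin_comp (S : Finset s) (hS : S.card = m) (τ : Equiv.Perm (Fin m)) :
    Finset.image (fun i => S.orderEmbOfFin hS (τ i)) Finset.univ = S := by
  have hinj : Function.Injective (fun i => S.orderEmbOfFin hS (τ i)) :=
    fun a b h => τ.injective ((S.orderEmbOfFin hS).injective h)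
  apply Finset.eq_of_subset_of_card_le
  · intro x hx
    simp only [Finset.mem_image] at hx
    obtain ⟨i, _, rfl⟩ := hx
    exact Finset.orderEmbOfFin_mem _ _ _
  · rw [hS, Finset.card_image_of_injective _ hinj, Finset.card_univ, Fintype.card_fin]

lemma det_mul_expand (A : Matrix (Fin m) s ℝ) (B : Matrix s (Fin m) ℝ) :
    (A * B).det = ∑ p : Fin m → s, (∏ i, A i (p i)) * (B.submatrix p id).det := by
  have h1 : (A * B) = Matrix.of fun i => ∑ j : s, A i j • B j := by
    ext i k; simp [Matrix.mul_apply]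
  rw [h1]
  show (Matrix.detRowAlternating : (Fin m → ℝ) [⋀^Fin m]→ₗ[ℝ] ℝ).toMultilinearMap
      (fun i => ∑ j : s, A i j • B j) = _
  rw [MultilinearMap.map_sum]
  refine Finset.sum_congr rfl fun p _ => ?_
  rw [MultilinearMap.map_smul_univ]
  rfl

lemma cauchy_binet (A : Matrix (Fin m) s ℝ) (B : Matrix s (Fin m) ℝ) :
    (A * B).det = ∑ S : {S : Finset s // S.card = m},
      (A.submatrix id (S.1.orderEmbOfFin S.2)).det *
        (B.submatrix (S.1.orderEmbOfFin S.2) id).det := by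
  rw [det_mul_expand, ← Finset.sum_filter_add_sum_filter_not Finset.univ
    (fun p : Fin m → s => Function.Injective p)]
  have hzero : ∑ p ∈ Finset.univ.filter (fun p : Fin m → s => ¬ Function.Injective p),
      (∏ i, A i (p i)) * (B.submatrix p id).det = 0 := by
    apply Finset.sum_eq_zero
    intro p hp
    simp only [Finset.mem_filter, Finset.mem_univ, true_and] at hp
    rw [Function.not_injective_iff] at hp
    obtain ⟨a, b, hab, hne⟩ := hp
    rw [Matrix.det_zero_of_row_eq hne (show (B.submatrix p id) a = (B.submatrix p id) b by
      funext j; simp [hab]), mul_zero]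
  rw [hzero, add_zero]
  have key : ∑ p ∈ Finset.univ.filter (fun p : Fin m → s => Function.Injective p),
      (∏ i, A i (p i)) * (B.submatrix p id).det
      = ∑ x : {S : Finset s // S.card = m} × Equiv.Perm (Fin m),
        (∏ i, A i (x.1.1.orderEmbOfFin x.1.2 (x.2 i))) *
          (B.submatrix (fun i => x.1.1.orderEmbOfFin x.1.2 (x.2 i)) id).det := by
    symm
    apply Finset.sum_bij (fun (x : {S : Finset s // S.card = m} × Equiv.Perm (Fin m)) _ =>
      (fun i => x.1.1.orderEmbOfFin x.1.2 (x.2 i)))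
    · intro x _
      simp only [Finset.mem_filter, Finset.mem_univ, true_and]
      exact fun a b h => x.2.injective ((x.1.1.orderEmbOfFin x.1.2).injective h)
    · rintro ⟨⟨S, hSc⟩, τ⟩ _ ⟨⟨S', hSc'⟩, τ'⟩ _ h
      have hS : S = S' := by
        rw [← image_orderEmbOfFin_comp S hSc τ, ← image_orderEmbOfFin_comp S' hSc' τ']
        rw [h]
      subst hS
      simp only [Prod.mk.injEq, Subtype.mk.injEq, true_and]
      ext i
      have := congrFun h i
      exact Fin.val_eq_of_eq ((S.orderEmbOfFin hSc).injective this)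
    · intro p hp
      simp only [Finset.mem_filter, Finset.mem_univ, true_and] at hp
      exact ⟨⟨⟨Finset.image p Finset.univ, card_image_inj p hp⟩, permOfInj p hp⟩,
        Finset.mem_univ _, funext fun i => orderEmbOfFin_permOfInj p hp i⟩
    · intro x _; rfl
  rw [key, Fintype.sum_prod_type]
  refine Finset.sum_congr rfl fun S _ => ?_
  have hdetA : (A.submatrix id (S.1.orderEmbOfFin S.2)).det
      = ∑ τ : Equiv.Perm (Fin m), ((Equiv.Perm.sign τ : ℤ) : ℝ) *
          ∏ i, A i (S.1.orderEmbOfFin S.2 (τ i)) := by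
    rw [← Matrix.det_transpose, Matrix.det_apply']
    rfl
  have hperm : ∀ τ : Equiv.Perm (Fin m),
      (B.submatrix (fun i => S.1.orderEmbOfFin S.2 (τ i)) id).det
        = ((Equiv.Perm.sign τ : ℤ) : ℝ) * (B.submatrix (S.1.orderEmbOfFin S.2) id).det := by
    intro τ
    have := Matrix.det_permute τ (B.submatrix (S.1.orderEmbOfFin S.2) id)
    rw [← this]
    rfl
  simp only [hperm]
  rw [hdetA, Finset.sum_mul]
  refine Finset.sum_congr rfl fun τ _ => by ring

end CauchyBinet

lemma orderEmbOfFin_congr {α : Type*} [LinearOrder α] (s : Finset α) {k k' : ℕ}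
    (h : s.card = k) (h' : s.card = k') (i : Fin k) (i' : Fin k')
    (hval : (i : ℕ) = (i' : ℕ)) : s.orderEmbOfFin h i = s.orderEmbOfFin h' i' := by
  subst h; subst h'
  exact congrArg _ (Fin.ext hval)

theorem stmt_11 (d n : ℕ) (hd : 0 < d) (A : Matrix (Fin d) (Fin n) ℝ) (hA : A.rank = d)
    (X : Matrix (Fin n) {s : Finset (Fin n) // s.card = d - 1} ℝ)
    (hX : ∀ i K, X i K = (A.submatrix id (colsIK d n hd i K.1 K.2)).det) :
    Aᵀ * (A * Aᵀ)⁻¹ * A = ((d : ℝ) / (Xᵀ * X).trace) • (X * Xᵀ) := by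
  obtain ⟨e, rfl⟩ : ∃ e, d = e + 1 := ⟨d - 1, (Nat.succ_pred_eq_of_pos hd).symm⟩
  set G := A * Aᵀ with hGdef
  -- the matrix of signed maximal minors of A with a row deleted
  set M : Matrix (Fin (e + 1)) {s : Finset (Fin n) // s.card = e + 1 - 1} ℝ :=
    fun a K => (-1 : ℝ) ^ (a : ℕ) *
      (A.submatrix a.succAbove (K.1.orderEmbOfFin (show K.1.card = e from K.2))).det with hMdef
  -- Step 1 : X = Aᵀ * M  (Laplace expansion along the first column)
  have hXM : X = Aᵀ * M := by
    ext i K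
    rw [hX i K, Matrix.det_succ_column_zero, Matrix.mul_apply]
    refine Finset.sum_congr rfl fun a _ => ?_
    have h0 : colsIK (e + 1) n hd i K.1 K.2 0 = i := by simp [colsIK]
    have hcols : ∀ y : Fin e, colsIK (e + 1) n hd i K.1 K.2 y.succ
        = K.1.orderEmbOfFin (show K.1.card = e from K.2) y := by
      intro y
      rw [colsIK, dif_neg (by simp [Fin.val_succ])]
      exact orderEmbOfFin_congr _ _ _ _ _ (by simp [Fin.val_succ])
    have hsub : (A.submatrix id (colsIK (e + 1) n hd i K.1 K.2)).submatrix
          a.succAbove Fin.succ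
        = A.submatrix a.succAbove (K.1.orderEmbOfFin (show K.1.card = e from K.2)) := by
      ext x y
      simp only [Matrix.submatrix_apply, id_eq, hcols y]
    rw [hsub]
    simp only [Matrix.submatrix_apply, id_eq, h0, Matrix.transpose_apply, hMdef]
    ring
  -- Step 2 : M * Mᵀ = adjugate G  (Cauchy–Binet on the deleted-row matrices)
  have hMM : M * Mᵀ = G.adjugate := by
    ext a b
    rw [Matrix.mul_apply]
    have hbridge : (∑ K : {s : Finset (Fin n) // s.card = e + 1 - 1}, M a K * Mᵀ K b)
        = ∑ S : {S : Finset (Fin n) // S.card = e}, M a S * Mᵀ S b :=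
      Fintype.sum_equiv
        (Equiv.refl {S : Finset (Fin n) // S.card = e} :
          {s : Finset (Fin n) // s.card = e + 1 - 1} ≃ {S : Finset (Fin n) // S.card = e})
        _ _ (fun _ => rfl)
    rw [hbridge]
    have hcb := cauchy_binet (m := e) (A.submatrix a.succAbove id) (Aᵀ.submatrix id b.succAbove)
    have hGsub : (A.submatrix a.succAbove id) * (Aᵀ.submatrix id b.succAbove)
        = G.submatrix a.succAbove b.succAbove := by
      ext x y; simp [Matrix.mul_apply, hGdef]
    have hterm : ∀ S : {S : Finset (Fin n) // S.card = e},
        M a S * Mᵀ S b = (-1 : ℝ) ^ ((a : ℕ) + (b : ℕ)) *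
          (((A.submatrix a.succAbove id).submatrix id (S.1.orderEmbOfFin S.2)).det *
            ((Aᵀ.submatrix id b.succAbove).submatrix (S.1.orderEmbOfFin S.2) id).det) := by
      intro S
      have h1 : ((A.submatrix a.succAbove id).submatrix id (S.1.orderEmbOfFin S.2))
          = A.submatrix a.succAbove (S.1.orderEmbOfFin S.2) := rfl
      have h2 : ((Aᵀ.submatrix id b.succAbove).submatrix (S.1.orderEmbOfFin S.2) id)
          = (A.submatrix b.succAbove (S.1.orderEmbOfFin S.2))ᵀ := rfl
      rw [h1, h2, Matrix.det_transpose, Matrix.transpose_apply, hMdef]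
      simp only [pow_add]
      ring
    rw [Finset.sum_congr rfl (fun S _ => hterm S), ← Finset.mul_sum, ← hcb, hGsub,
      Matrix.adjugate_fin_succ_eq_det_submatrix]
    have hsymm : G.submatrix b.succAbove a.succAbove
        = (G.submatrix a.succAbove b.succAbove)ᵀ := by
      ext x y; simp [hGdef, Matrix.mul_apply, mul_comm]
    rw [hsymm, Matrix.det_transpose, Nat.add_comm (b : ℕ) (a : ℕ)]
  -- G is invertible
  have hrk : G.rank = e + 1 := by
    rw [hGdef, Matrix.rank_self_mul_transpose, hA]
  have hGunit : IsUnit G := by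
    rw [← Matrix.mulVec_surjective_iff_isUnit]
    have hrange : LinearMap.range G.mulVecLin = ⊤ := by
      apply Submodule.eq_top_of_finrank_eq
      rw [show Module.finrank ℝ (LinearMap.range G.mulVecLin) = G.rank from rfl, hrk]
      simp
    intro y
    obtain ⟨x, hx⟩ := LinearMap.range_eq_top.mp hrange y
    exact ⟨x, hx⟩
  have hdet : G.det ≠ 0 := ((Matrix.isUnit_iff_isUnit_det G).mp hGunit).ne_zero
  -- X * Xᵀ = Aᵀ * adjugate G * A
  have hXXt : X * Xᵀ = Aᵀ * G.adjugate * A := by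
    rw [hXM, Matrix.transpose_mul, Matrix.transpose_transpose, Matrix.mul_assoc,
      ← Matrix.mul_assoc M, hMM, Matrix.mul_assoc, ← Matrix.mul_assoc]
  -- trace computation
  have htrace : (Xᵀ * X).trace = G.det * ((e : ℝ) + 1) := by
    rw [← Matrix.trace_mul_comm, hXXt, Matrix.mul_assoc, Matrix.trace_mul_comm,
      Matrix.mul_assoc, ← hGdef, Matrix.adjugate_mul, Matrix.trace_smul, Matrix.trace_one]
    simp [smul_eq_mul, mul_comm]
  rw [hXXt, htrace]
  have hG9 : Aᵀ * G⁻¹ * A = G.det⁻¹ • (Aᵀ * G.adjugate * A) := by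
    rw [Matrix.inv_def, Ring.inverse_eq_inv', Matrix.mul_smul, Matrix.smul_mul]
  rw [hG9]
  congr 1
  have he1 : ((e : ℝ) + 1) ≠ 0 := by positivity
  push_cast
  field_simp
end

section
/- Let x_{12}, x_{13}, x_{14}, x_{23}, x_{24}, x_{34} be real numbers satisfying the Plücker relation x_{12}x_{34} − x_{13}x_{24} + x_{14}x_{23} = 0, and set q_ij = x_ij². Then q₁₂²q₃₄² + q₁₃²q₂₄² + q₁₄²q₂₃² − 2q₁₂q₁₃q₂₄q₃₄ − 2q₁₂q₁₄q₂₃q₃₄ − 2q₁₃q₁₄q₂₃q₂₄ = 0. -/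
theorem stmt_13 (x12 x13 x14 x23 x24 x34 : ℝ)
    (h : x12 * x34 - x13 * x24 + x14 * x23 = 0)
    (q12 q13 q14 q23 q24 q34 : ℝ)
    (hq12 : q12 = x12 ^ 2) (hq13 : q13 = x13 ^ 2) (hq14 : q14 = x14 ^ 2)
    (hq23 : q23 = x23 ^ 2) (hq24 : q24 = x24 ^ 2) (hq34 : q34 = x34 ^ 2) :
    q12 ^ 2 * q34 ^ 2 + q13 ^ 2 * q24 ^ 2 + q14 ^ 2 * q23 ^ 2
      - 2 * q12 * q13 * q24 * q34 - 2 * q12 * q14 * q23 * q34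
      - 2 * q13 * q14 * q23 * q24 = 0 := by
  subst hq12 hq13 hq14 hq23 hq24 hq34
  linear_combination (-(x12*x34+x13*x24+x14*x23)*(-(x12*x34)+x13*x24+x14*x23)*(x12*x34+x13*x24-x14*x23)) * h
end
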